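/- arXiv:2304.05305 — 3 statements merged into one kernel-verified Lean document; each statement's English description precedes it below -/
import Mathlib

section
/- Let X be a real m×n matrix, T a real n×t matrix with Range(X T) = Range(X), and S a real m×s matrix with Range(Xᵀ S) = Range(Xᵀ). Then rank(Sᵀ X T) = rank(X). In particular, if rank(X) = r, then any matrix P with rank(P) ≤ r and ‖Sᵀ X T − P‖₂ ≤ ‖Sᵀ X T − M‖₂ for all s×t matrices M with rank(M) ≤ r must equal Sᵀ X T. -/
open Matrix MeasureTheory ProbabilityTheory

noncomputable def specNorm {m n : ℕ} (A : Matrix (Fin m) (Fin n) ℝ) : ℝ :=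
  ‖LinearMap.toContinuousLinearMap (Matrix.toEuclideanLin A)‖

noncomputable def frobNorm {m n : ℕ} (A : Matrix (Fin m) (Fin n) ℝ) : ℝ :=
  Real.sqrt (∑ i, ∑ j, (A i j) ^ 2)

/-- The column space (range) of a real matrix. -/
def colSpace {m n : ℕ} (A : Matrix (Fin m) (Fin n) ℝ) : Submodule ℝ (Fin m → ℝ) :=
  LinearMap.range A.mulVecLin

/-- `G` is the Moore-Penrose pseudoinverse of `A`. -/
def IsMPInv {m n : ℕ} (A : Matrix (Fin m) (Fin n) ℝ) (G : Matrix (Fin n) (Fin m) ℝ) : Prop :=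
  A * G * A = A ∧ G * A * G = G ∧ (A * G)ᵀ = A * G ∧ (G * A)ᵀ = G * A

lemma exists_factor {m n k : ℕ} (A : Matrix (Fin m) (Fin k) ℝ) (X : Matrix (Fin m) (Fin n) ℝ)
    (h : colSpace X ≤ colSpace A) : ∃ C : Matrix (Fin k) (Fin n) ℝ, A * C = X := by
  have key : ∀ j : Fin n, ∃ v : Fin k → ℝ, A *ᵥ v = X *ᵥ Pi.single j 1 := fun j =>
    h ⟨Pi.single j 1, rfl⟩
  choose v hv using key
  refine ⟨Matrix.of fun i j => v j i, ?_⟩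
  ext i j
  have := congrFun (hv j) i
  simpa [Matrix.mul_apply, Matrix.mulVec, dotProduct, Pi.single_apply,
    mul_comm, Finset.sum_ite_eq, Finset.sum_ite_eq'] using this

lemma specNorm_eq_zero {m n : ℕ} {A : Matrix (Fin m) (Fin n) ℝ} (h : specNorm A ≤ 0) :
    A = 0 := by
  have h0 : LinearMap.toContinuousLinearMap (Matrix.toEuclideanLin A) = 0 :=
    norm_le_zero_iff.mp h
  have h1 : Matrix.toEuclideanLin A = 0 := by
    exact_mod_cast (map_eq_zero_iff _ LinearMap.toContinuousLinearMap.injective).mp h0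
  exact (map_eq_zero_iff _ Matrix.toEuclideanLin.injective).mp h1

theorem stmt2 {m n s t r : ℕ} (X : Matrix (Fin m) (Fin n) ℝ)
    (T : Matrix (Fin n) (Fin t) ℝ) (S : Matrix (Fin m) (Fin s) ℝ)
    (hT : colSpace (X * T) = colSpace X) (hS : colSpace (Xᵀ * S) = colSpace Xᵀ)
    (hr : X.rank = r)
    (P : Matrix (Fin s) (Fin t) ℝ) (hPr : P.rank ≤ r)
    (hPbest : ∀ M : Matrix (Fin s) (Fin t) ℝ, M.rank ≤ r →
      specNorm (Sᵀ * X * T - P) ≤ specNorm (Sᵀ * X * T - M)) :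
    (Sᵀ * X * T).rank = X.rank ∧ P = Sᵀ * X * T := by
  obtain ⟨C, hC⟩ := exists_factor (X * T) X hT.ge
  obtain ⟨D, hD⟩ := exists_factor (Xᵀ * S) Xᵀ hS.ge
  have hD' : Dᵀ * (Sᵀ * X) = X := by
    have := congrArg Matrix.transpose hD
    simpa [Matrix.transpose_mul, Matrix.mul_assoc] using this
  have hfac : Dᵀ * (Sᵀ * X * T) * C = X := by
    simp only [Matrix.mul_assoc] at hC hD' ⊢
    rw [hC, hD']
  have h1 : (Sᵀ * X * T).rank ≤ X.rank :=
    le_trans (Matrix.rank_mul_le_left (Sᵀ * X) T) (Matrix.rank_mul_le_right Sᵀ X)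
  have h2 : X.rank ≤ (Sᵀ * X * T).rank := by
    conv_lhs => rw [← hfac]
    exact le_trans (Matrix.rank_mul_le_left _ C) (Matrix.rank_mul_le_right Dᵀ _)
  have hrank : (Sᵀ * X * T).rank = X.rank := le_antisymm h1 h2
  refine ⟨hrank, ?_⟩
  have hle := hPbest (Sᵀ * X * T) (le_of_eq (hrank.trans hr))
  rw [sub_self] at hle
  have hz : specNorm ((0 : Matrix (Fin s) (Fin t) ℝ)) = 0 := by
    simp [specNorm]
  have : Sᵀ * X * T - P = 0 := specNorm_eq_zero (by rw [hz] at hle; exact hle)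
  have := sub_eq_zero.mp this
  exact this.symm
end

section
/- (Wedin's perturbation bound) Let A and B be real m×n matrices with rank(A) = rank(B). Then ‖A† − B†‖₂ ≤ 3 ‖A†‖₂ ‖B†‖₂ ‖A − B‖₂. -/
/-!
Write `A⁺ - B⁺ = B⁺ (B - A) A⁺ - B⁺ (1 - A A⁺) + (1 - B⁺ B) A⁺`. The first term is at most
`‖A⁺‖ ‖B⁺‖ ‖A - B‖` outright. In the second, `B⁺ = B⁺ (B B⁺)` and
`‖B B⁺ (1 - A A⁺)‖ = ‖(1 - A A⁺) B B⁺‖`; since `A A⁺` and `B B⁺` are orthogonal projections of the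
same rank, this is at most `‖(1 - B B⁺) A A⁺‖ = ‖(1 - B B⁺) (A - B) A⁺‖ ≤ ‖A - B‖ ‖A⁺‖`. The third
term is the second one for the transposed pair `(Bᵀ, Aᵀ)`.

The symmetry of the gap between subspaces `U`, `V` of equal dimension: if `s = ‖P_{V^⊥} P_U‖ < 1`,
then `P_V` is injective on `U`, hence maps `U` onto `V`. Each `y ∈ V` is then `P_V x` with `x ∈ U`,
`(1 - s²) ‖x‖² ≤ ‖y‖²` and `‖y‖² = ⟪x, P_U y⟫`, which gives `(1 - s²) ‖y‖² ≤ ‖P_U y‖²`, i.e.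
`‖P_{U^⊥} y‖ ≤ s ‖y‖`.
-/

open Matrix MeasureTheory ProbabilityTheory

open Module

open scoped Matrix.Norms.L2Operator

namespace Submodule

variable {𝕜 E : Type*} [RCLike 𝕜] [NormedAddCommGroup E] [InnerProductSpace 𝕜 E]
  [FiniteDimensional 𝕜 E] {U V : Submodule 𝕜 E}

theorem norm_sub_starProjection_le_of_mem {x : E} (hx : x ∈ U) :
    ‖x - V.starProjection x‖ ≤ ‖Vᗮ.starProjection * U.starProjection‖ * ‖x‖ := by
  simpa [U.starProjection_eq_self_iff.mpr hx] using
    (Vᗮ.starProjection * U.starProjection).le_opNorm x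

theorem exists_mem_starProjection_eq (hdim : finrank 𝕜 U = finrank 𝕜 V)
    (hs : ‖Vᗮ.starProjection * U.starProjection‖ < 1) {y : E} (hy : y ∈ V) :
    ∃ x ∈ U, V.starProjection x = y := by
  let f : U →ₗ[𝕜] V := V.orthogonalProjectionOnto.toLinearMap ∘ₗ U.subtype
  have hinj : Function.Injective f := by
    refine (injective_iff_map_eq_zero f).mpr fun x hx => ?_
    have hle := norm_sub_starProjection_le_of_mem (V := V) x.2
    rw [show V.starProjection x = 0 from congrArg Subtype.val hx, sub_zero] at hle
    have : ‖(x : E)‖ = 0 := by nlinarith [norm_nonneg (x : E)]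
    exact Subtype.ext (norm_eq_zero.mp this)
  obtain ⟨x, hx⟩ :=
    (LinearMap.injective_iff_surjective_of_finrank_eq_finrank hdim).mp hinj ⟨y, hy⟩
  exact ⟨x, x.2, congrArg Subtype.val hx⟩

theorem one_sub_sq_mul_norm_sq_le_norm_starProjection_sq
    (hdim : finrank 𝕜 U = finrank 𝕜 V) {y : E} (hy : y ∈ V) :
    (1 - ‖Vᗮ.starProjection * U.starProjection‖ ^ 2) * ‖y‖ ^ 2 ≤
      ‖U.starProjection y‖ ^ 2 := by
  set s := ‖Vᗮ.starProjection * U.starProjection‖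
  rcases le_or_gt 1 s with hs | hs
  · exact (mul_nonpos_of_nonpos_of_nonneg (by nlinarith) (sq_nonneg _)).trans (sq_nonneg _)
  obtain ⟨x, hxU, rfl⟩ := exists_mem_starProjection_eq hdim hs hy
  have hx : (1 - s ^ 2) * ‖x‖ ^ 2 ≤ ‖V.starProjection x‖ ^ 2 := by
    have hpyth := V.norm_sq_eq_add_norm_sq_starProjection x
    have hle := norm_sub_starProjection_le_of_mem (V := V) hxU
    rw [starProjection_orthogonal_val] at hpyth
    nlinarith [pow_le_pow_left₀ (norm_nonneg _) hle 2]
  have hinner :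
      ‖V.starProjection x‖ ^ 2 ≤ ‖x‖ * ‖U.starProjection (V.starProjection x)‖ := by
    calc ‖V.starProjection x‖ ^ 2
        = RCLike.re (inner 𝕜 (V.starProjection x) (V.starProjection x)) :=
          (inner_self_eq_norm_sq _).symm
      _ = RCLike.re (inner 𝕜 x (U.starProjection (V.starProjection x))) := by
          rw [V.inner_starProjection_left_eq_right, V.starProjection_eq_self_iff.mpr
            (V.starProjection_apply_mem x), ← U.starProjection_eq_self_iff.mpr hxU,
            U.inner_starProjection_left_eq_right, U.starProjection_eq_self_iff.mpr hxU]
      _ ≤ ‖x‖ * ‖U.starProjection (V.starProjection x)‖ := re_inner_le_norm _ _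
  rcases (sq_nonneg ‖V.starProjection x‖).eq_or_lt with hzero | hpos
  · rw [← hzero, mul_zero]
    exact sq_nonneg _
  refine le_of_mul_le_mul_left ?_ hpos
  have hc : 0 ≤ 1 - s ^ 2 := by nlinarith [norm_nonneg (Vᗮ.starProjection * U.starProjection)]
  nlinarith [mul_le_mul_of_nonneg_left (mul_le_mul hinner hinner hpos.le (by positivity)) hc,
    mul_le_mul_of_nonneg_right hx (sq_nonneg ‖U.starProjection (V.starProjection x)‖)]

theorem norm_starProjection_orthogonal_mul_le_of_finrank_eq
    (hdim : finrank 𝕜 U = finrank 𝕜 V) :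
    ‖Uᗮ.starProjection * V.starProjection‖ ≤ ‖Vᗮ.starProjection * U.starProjection‖ := by
  set s := ‖Vᗮ.starProjection * U.starProjection‖
  refine ContinuousLinearMap.opNorm_le_bound _ (norm_nonneg _) fun v => ?_
  set y := V.starProjection v
  have hy := one_sub_sq_mul_norm_sq_le_norm_starProjection_sq hdim (V.starProjection_apply_mem v)
  have hpyth := U.norm_sq_eq_add_norm_sq_starProjection y
  have hyv : ‖y‖ ≤ ‖v‖ := V.norm_starProjection_apply_le v
  have hsq : ‖Uᗮ.starProjection y‖ ^ 2 ≤ (s * ‖v‖) ^ 2 := by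
    nlinarith [mul_le_mul_of_nonneg_left (pow_le_pow_left₀ (norm_nonneg _) hyv 2) (sq_nonneg s)]
  exact pow_le_pow_iff_left₀ (norm_nonneg _) (by positivity) two_ne_zero |>.mp hsq

end Submodule

namespace Matrix

variable {𝕜 n : Type*} [RCLike 𝕜] [Fintype n] [DecidableEq n]

theorem rank_eq_finrank_range_toEuclideanLin {m : Type*} [Fintype m] (A : Matrix m n 𝕜) :
    A.rank = finrank 𝕜 (LinearMap.range (toEuclideanLin (𝕜 := 𝕜) A)) :=
  A.rank_eq_finrank_range_toLin (PiLp.basisFun 2 𝕜 m) (PiLp.basisFun 2 𝕜 n)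

theorem l2_opNorm_transpose [TrivialStar 𝕜] {m : Type*} [Fintype m] [DecidableEq m]
    (A : Matrix m n 𝕜) : ‖Aᵀ‖ = ‖A‖ := by
  rw [← conjTranspose_eq_transpose_of_trivial, l2_opNorm_conjTranspose]

theorem norm_one_sub_mul_le_of_rank_eq {P Q : Matrix n n 𝕜} (hP : IsStarProjection P)
    (hQ : IsStarProjection Q) (hrank : P.rank = Q.rank) :
    ‖(1 - P) * Q‖ ≤ ‖(1 - Q) * P‖ := by
  obtain ⟨_, hp⟩ := isStarProjection_iff_eq_starProjection_range.mp <|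
    hP.map (toEuclideanCLM (n := n) (𝕜 := 𝕜))
  obtain ⟨_, hq⟩ := isStarProjection_iff_eq_starProjection_range.mp <|
    hQ.map (toEuclideanCLM (n := n) (𝕜 := 𝕜))
  simp only [cstar_norm_def, map_mul, map_sub, map_one]
  rw [hp, hq, ← Submodule.starProjection_orthogonal', ← Submodule.starProjection_orthogonal']
  apply Submodule.norm_starProjection_orthogonal_mul_le_of_finrank_eq
  rw [coe_toEuclideanCLM_eq_toEuclideanLin, coe_toEuclideanCLM_eq_toEuclideanLin,
    ← rank_eq_finrank_range_toEuclideanLin, ← rank_eq_finrank_range_toEuclideanLin, hrank]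

theorem norm_mul_le_of_isStarProjection {m : Type*} [Fintype m] [DecidableEq m]
    {P : Matrix n n 𝕜} (hP : IsStarProjection P) (M : Matrix n m 𝕜) : ‖P * M‖ ≤ ‖M‖ :=
  (l2_opNorm_mul P M).trans (mul_le_of_le_one_left (norm_nonneg M) (hP.norm_le P))

end Matrix

theorem specNorm_eq_norm {m n : ℕ} (A : Matrix (Fin m) (Fin n) ℝ) : specNorm A = ‖A‖ := rfl

namespace IsMPInv

variable {m n : ℕ} {A B : Matrix (Fin m) (Fin n) ℝ} {Ad Bd : Matrix (Fin n) (Fin m) ℝ}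

theorem transpose (h : IsMPInv A Ad) : IsMPInv Aᵀ Adᵀ := by
  obtain ⟨h1, h2, h3, h4⟩ := h
  refine ⟨?_, ?_, ?_, ?_⟩
  · rw [← transpose_mul, ← transpose_mul, ← Matrix.mul_assoc, h1]
  · rw [← transpose_mul, ← transpose_mul, ← Matrix.mul_assoc, h2]
  · rw [← transpose_mul, transpose_transpose, h4]
  · rw [← transpose_mul, transpose_transpose, h3]

theorem isStarProjection_mul (h : IsMPInv A Ad) : IsStarProjection (A * Ad) :=
  isStarProjection_iff'.mpr ⟨by rw [← Matrix.mul_assoc, h.1], by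
    rw [star_eq_conjTranspose, conjTranspose_eq_transpose_of_trivial, h.2.2.1]⟩

theorem rank_mul (h : IsMPInv A Ad) : (A * Ad).rank = A.rank :=
  le_antisymm (A.rank_mul_le_left Ad) <| by
    calc A.rank = (A * Ad * A).rank := by rw [h.1]
      _ ≤ (A * Ad).rank := Matrix.rank_mul_le_left _ _

theorem one_sub_mul_mul_self (h : IsMPInv A Ad) : (1 - A * Ad) * A = 0 := by
  rw [Matrix.sub_mul, Matrix.one_mul, h.1, sub_self]

theorem norm_mul_one_sub_mul_le (hA : IsMPInv A Ad) (hB : IsMPInv B Bd)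
    (hrank : A.rank = B.rank) : ‖Bd * (1 - A * Ad)‖ ≤ ‖Bd‖ * ‖A - B‖ * ‖Ad‖ := by
  have hP := hA.isStarProjection_mul
  have hQ := hB.isStarProjection_mul
  calc ‖Bd * (1 - A * Ad)‖ = ‖Bd * (B * Bd * (1 - A * Ad))‖ := by
        rw [← Matrix.mul_assoc, ← Matrix.mul_assoc, hB.2.1]
    _ ≤ ‖Bd‖ * ‖B * Bd * (1 - A * Ad)‖ := l2_opNorm_mul _ _
    _ = ‖Bd‖ * ‖(1 - A * Ad) * (B * Bd)‖ := by
        rw [← norm_star (B * Bd * (1 - A * Ad)), star_mul, hQ.isSelfAdjoint.star_eq,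
          hP.one_sub.isSelfAdjoint.star_eq]
    _ ≤ ‖Bd‖ * ‖(1 - B * Bd) * (A * Ad)‖ := by
        gcongr
        exact norm_one_sub_mul_le_of_rank_eq hP hQ (by rw [hA.rank_mul, hB.rank_mul, hrank])
    _ = ‖Bd‖ * ‖(1 - B * Bd) * (A - B) * Ad‖ := by
        rw [Matrix.mul_sub, hB.one_sub_mul_mul_self, sub_zero, Matrix.mul_assoc]
    _ ≤ ‖Bd‖ * (‖A - B‖ * ‖Ad‖) := by
        gcongr
        exact (l2_opNorm_mul _ _).trans <| by
          gcongr
          exact norm_mul_le_of_isStarProjection hQ.one_sub _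
    _ = ‖Bd‖ * ‖A - B‖ * ‖Ad‖ := (mul_assoc _ _ _).symm

end IsMPInv

theorem stmt3 {m n : ℕ} (A B : Matrix (Fin m) (Fin n) ℝ)
    (Ad Bd : Matrix (Fin n) (Fin m) ℝ) (hA : IsMPInv A Ad) (hB : IsMPInv B Bd)
    (hrank : A.rank = B.rank) :
    specNorm (Ad - Bd) ≤ 3 * specNorm Ad * specNorm Bd * specNorm (A - B) := by
  simp only [specNorm_eq_norm]
  have hdecomp : Ad - Bd = Bd * (B - A) * Ad - Bd * (1 - A * Ad) + (1 - Bd * B) * Ad := by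
    simp only [Matrix.mul_sub, Matrix.sub_mul, Matrix.mul_one, Matrix.one_mul, Matrix.mul_assoc]
    abel
  have h1 : ‖Bd * (B - A) * Ad‖ ≤ ‖Bd‖ * ‖A - B‖ * ‖Ad‖ := by
    rw [norm_sub_rev A B]
    exact (l2_opNorm_mul _ _).trans (by gcongr; exact l2_opNorm_mul _ _)
  have h2 := hA.norm_mul_one_sub_mul_le hB hrank
  have h3 : ‖(1 - Bd * B) * Ad‖ ≤ ‖Ad‖ * ‖A - B‖ * ‖Bd‖ := by
    have := hB.transpose.norm_mul_one_sub_mul_le hA.transpose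
      (by simp only [rank_transpose, hrank])
    rwa [← transpose_one, ← transpose_mul, ← transpose_sub, ← transpose_mul, ← transpose_sub,
      l2_opNorm_transpose, l2_opNorm_transpose, l2_opNorm_transpose, l2_opNorm_transpose,
      norm_sub_rev] at this
  calc ‖Ad - Bd‖
      ≤ ‖Bd * (B - A) * Ad‖ + ‖Bd * (1 - A * Ad)‖ + ‖(1 - Bd * B) * Ad‖ := by
        rw [hdecomp]
        exact (norm_add_le _ _).trans (add_le_add_left (norm_sub_le _ _) _)
    _ ≤ 3 * ‖Ad‖ * ‖Bd‖ * ‖A - B‖ := by linarith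
end

section
/- Let P₁ be a real m×r̃ matrix, P₂ a real n×r̃ matrix, S₁ a real m×s matrix, S₂ a real n×s matrix, and B a real m×n matrix. Suppose Range(B) ⊆ Range(P₁), Range(Bᵀ) ⊆ Range(P₂), Range((S₁ᵀ P₁)ᵀ) = Range(P₁ᵀ), and Range((S₂ᵀ P₂)ᵀ) = Range(P₂ᵀ). Define A₁ = S₁ᵀ P₁, A₂ = S₂ᵀ P₂, and G = A₁† (S₁ᵀ B S₂) (A₂†)ᵀ. Then P₁ G P₂ᵀ = B. -/
open Matrix MeasureTheory ProbabilityTheory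

/-!
Since `Range(A₁ᵀ) = Range(P₁ᵀ)`, we can write `P₁ = Z A₁`, so `P₁ A₁† A₁ = Z A₁ A₁† A₁ = P₁`.
Hence `P₁ A₁† S₁ᵀ` acts as the identity on `Range(P₁) ⊇ Range(B)`, i.e. `P₁ A₁† S₁ᵀ B = B`.
Transposing the same argument for `P₂, S₂, Bᵀ` gives `B S₂ A₂†ᵀ P₂ᵀ = B`, and
`P₁ G P₂ᵀ = (P₁ A₁† S₁ᵀ B) S₂ A₂†ᵀ P₂ᵀ`.
-/

namespace Matrix

variable {R l m n k : Type*} [CommSemiring R] [Fintype m] [Fintype n]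

theorem exists_eq_mul_of_range_mulVecLin_le [DecidableEq n] {A : Matrix l n R}
    {P : Matrix l m R} (h : LinearMap.range A.mulVecLin ≤ LinearMap.range P.mulVecLin) :
    ∃ X : Matrix m n R, A = P * X := by
  have hcol (j : n) : ∃ v, P *ᵥ v = A.col j := h ⟨Pi.single j 1, mulVec_single_one A j⟩
  choose v hv using hcol
  exact ⟨(of v)ᵀ, ext fun i j => (congrFun (hv j) i).symm⟩

theorem mul_mul_transpose_mul_eq_of_range_le [Fintype l] [Fintype k] [DecidableEq l] [DecidableEq n]
    {P : Matrix l m R} {S : Matrix l k R} {Ad : Matrix m k R} {B : Matrix l n R}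
    (hAd : Sᵀ * P * Ad * (Sᵀ * P) = Sᵀ * P)
    (hS : LinearMap.range Pᵀ.mulVecLin ≤ LinearMap.range (Sᵀ * P)ᵀ.mulVecLin)
    (hB : LinearMap.range B.mulVecLin ≤ LinearMap.range P.mulVecLin) :
    P * Ad * Sᵀ * B = B := by
  obtain ⟨Z, hZ⟩ := exists_eq_mul_of_range_mulVecLin_le hS
  obtain ⟨X, rfl⟩ := exists_eq_mul_of_range_mulVecLin_le hB
  have hP : P = Zᵀ * (Sᵀ * P) := by
    simpa only [transpose_mul, transpose_transpose] using congrArg transpose hZ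
  calc P * Ad * Sᵀ * (P * X) = Zᵀ * (Sᵀ * P * Ad * (Sᵀ * P)) * X := by
        nth_rw 1 [hP]; simp only [Matrix.mul_assoc]
    _ = P * X := by rw [hAd, ← hP]

end Matrix

theorem stmt16 {m n rt s : ℕ}
    (P₁ : Matrix (Fin m) (Fin rt) ℝ) (P₂ : Matrix (Fin n) (Fin rt) ℝ)
    (S₁ : Matrix (Fin m) (Fin s) ℝ) (S₂ : Matrix (Fin n) (Fin s) ℝ)
    (B : Matrix (Fin m) (Fin n) ℝ)
    (hB1 : colSpace B ≤ colSpace P₁) (hB2 : colSpace Bᵀ ≤ colSpace P₂)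
    (hS1 : colSpace (S₁ᵀ * P₁)ᵀ = colSpace P₁ᵀ)
    (hS2 : colSpace (S₂ᵀ * P₂)ᵀ = colSpace P₂ᵀ)
    (A₁ : Matrix (Fin s) (Fin rt) ℝ) (hA₁ : A₁ = S₁ᵀ * P₁)
    (A₂ : Matrix (Fin s) (Fin rt) ℝ) (hA₂ : A₂ = S₂ᵀ * P₂)
    (A₁d : Matrix (Fin rt) (Fin s) ℝ) (hA₁d : IsMPInv A₁ A₁d)
    (A₂d : Matrix (Fin rt) (Fin s) ℝ) (hA₂d : IsMPInv A₂ A₂d)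
    (G : Matrix (Fin rt) (Fin rt) ℝ) (hG : G = A₁d * (S₁ᵀ * B * S₂) * A₂dᵀ) :
    P₁ * G * P₂ᵀ = B := by
  subst hA₁ hA₂ hG
  have hleft : P₁ * A₁d * S₁ᵀ * B = B :=
    mul_mul_transpose_mul_eq_of_range_le hA₁d.1 hS1.ge hB1
  have hright : B * S₂ * A₂dᵀ * P₂ᵀ = B := by
    simpa only [transpose_mul, transpose_transpose, Matrix.mul_assoc] using
      congrArg transpose (mul_mul_transpose_mul_eq_of_range_le hA₂d.1 hS2.ge hB2)
  calc P₁ * (A₁d * (S₁ᵀ * B * S₂) * A₂dᵀ) * P₂ᵀ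
      = (P₁ * A₁d * S₁ᵀ * B) * S₂ * A₂dᵀ * P₂ᵀ := by simp only [Matrix.mul_assoc]
    _ = B := by rw [hleft, hright]
end
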